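/- Let ε > 0, α > 0, and let a = (a_k)_{k≥1} and b = (b_k)_{k≥1} be nonincreasing nonnegative real sequences in ℓ² with ‖a − b‖_{ℓ²} ≤ ε. Assume a_k ≤ C e^{−c k^β} for all k ≥ 1, with constants C, c, β > 0, and assume 0 < α < 2C. Then #{i : b_i ≥ α} ≤ 4ε²/α² + (c^{−1} ln(2C α^{−1}))^{1/β}. -/

import Mathlib

/-!
Put `K = (c⁻¹ log (2C/α))^{1/β}`. The decay bound gives `a_i ≤ α/2` as soon as `i + 1 ≥ K`, so
for those indices `b_i ≥ α` forces `(a_i - b_i)² ≥ α²/4`; by Chebyshev's inequality for the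
series `∑ (a_i - b_i)² ≤ ε²` there are at most `4ε²/α²` of them. Every other index with
`b_i ≥ α` is among the first `⌊K⌋₊ ≤ K` ones.
-/

open Set Filter Real

theorem Memℓp.summable_sq {ι : Type*} {f : ι → ℝ} (hf : Memℓp f 2) :
    Summable fun i => f i ^ 2 := by
  simpa [Real.norm_eq_abs, Real.rpow_two, sq_abs] using
    (memℓp_gen_iff (p := 2) (by norm_num)).1 hf

theorem Summable.finite_setOf_le {ι : Type*} {f : ι → ℝ} (hf : Summable f) {δ : ℝ}
    (hδ : 0 < δ) : {i | δ ≤ f i}.Finite := by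
  simpa only [not_lt] using
    eventually_cofinite.1 (hf.tendsto_cofinite_zero.eventually (gt_mem_nhds hδ))

theorem Summable.ncard_setOf_le_le_tsum_div {ι : Type*} {f : ι → ℝ} (hf : Summable f)
    (hf0 : ∀ i, 0 ≤ f i) {δ : ℝ} (hδ : 0 < δ) :
    ({i | δ ≤ f i}.ncard : ℝ) ≤ (∑' i, f i) / δ := by
  have hT := hf.finite_setOf_le hδ
  rw [le_div_iff₀ hδ, Set.ncard_eq_toFinset_card _ hT, ← nsmul_eq_mul]
  calc hT.toFinset.card • δ ≤ ∑ i ∈ hT.toFinset, f i :=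
        Finset.card_nsmul_le_sum _ _ _ fun i hi => hT.mem_toFinset.1 hi
    _ ≤ ∑' i, f i := hf.sum_le_tsum _ fun i _ => hf0 i

theorem Set.ncard_le_of_subset_Iio_union {s t : Set ℕ} {n : ℕ} (h : s ⊆ Iio n ∪ t)
    (ht : t.Finite) : s.ncard ≤ n + t.ncard :=
  (ncard_le_ncard h ((finite_Iio n).union ht)).trans
    ((ncard_union_le _ _).trans_eq (by rw [ncard_Iio_nat]))

theorem inv_mul_log_div_nonneg {C c γ : ℝ} (hc : 0 < c) (hγ : 0 < γ) (hγC : γ ≤ C) :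
    0 ≤ c⁻¹ * log (C / γ) :=
  mul_nonneg (inv_nonneg.2 hc.le) (log_nonneg ((one_le_div hγ).2 hγC))

theorem mul_exp_neg_rpow_le {C c β γ x : ℝ} (hc : 0 < c) (hβ : 0 < β) (hγ : 0 < γ)
    (hγC : γ ≤ C) (hx : (c⁻¹ * log (C / γ)) ^ (1 / β) ≤ x) :
    C * exp (-c * x ^ β) ≤ γ := by
  have hC : 0 < C := hγ.trans_le hγC
  have hL := inv_mul_log_div_nonneg hc hγ hγC
  have hxβ : log (C / γ) ≤ c * x ^ β := by
    rwa [one_div, rpow_inv_le_iff_of_pos hL ((rpow_nonneg hL _).trans hx) hβ,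
      inv_mul_le_iff₀ hc] at hx
  calc C * exp (-c * x ^ β) ≤ C * exp (-log (C / γ)) := by gcongr; linarith
    _ = γ := by rw [exp_neg, exp_log (div_pos hC hγ)]; field_simp

theorem count_above_threshold_exp_general
    (ε α : ℝ)
    (a b : ℕ → ℝ)
    (hal2 : Memℓp a 2) (hbl2 : Memℓp b 2)
    (hdist : Real.sqrt (∑' k : ℕ, (a k - b k) ^ 2) ≤ ε)
    (C c β : ℝ) (hc : 0 < c) (hβ : 0 < β)
    (hdecay : ∀ k : ℕ, a k ≤ C * Real.exp (-c * ((k : ℝ) + 1) ^ β))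
    (hα0 : 0 < α) (hα2C : α < 2 * C) :
    (({i : ℕ | α ≤ b i}).ncard : ℝ)
      ≤ 4 * ε ^ 2 / α ^ 2 + (c⁻¹ * Real.log (2 * C * α⁻¹)) ^ (1/β) := by
  set K := (c⁻¹ * Real.log (2 * C * α⁻¹)) ^ (1/β)
  set T := {i : ℕ | (α / 2) ^ 2 ≤ (a i - b i) ^ 2}
  have hsum : Summable fun k => (a k - b k) ^ 2 := (hal2.sub hbl2).summable_sq
  have hsq : ∑' k, (a k - b k) ^ 2 ≤ ε ^ 2 := (Real.sqrt_le_iff.1 hdist).2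
  have hratio : C / (α / 2) = 2 * C * α⁻¹ := by ring
  have hsmall : ∀ i, ⌊K⌋₊ ≤ i → a i ≤ α / 2 := fun i hi => by
    refine (hdecay i).trans (mul_exp_neg_rpow_le hc hβ (by positivity) (by linarith) ?_)
    rw [hratio]
    exact (Nat.lt_floor_add_one K).le.trans (by exact_mod_cast Nat.succ_le_succ hi)
  have hcover : {i | α ≤ b i} ⊆ Iio ⌊K⌋₊ ∪ T := fun i hi => by
    refine (lt_or_ge i ⌊K⌋₊).imp id fun hKi => ?_
    have := hsmall i hKi
    simp only [T, mem_ofPred_eq] at hi ⊢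
    nlinarith
  have hT : (T.ncard : ℝ) ≤ 4 * ε ^ 2 / α ^ 2 :=
    (hsum.ncard_setOf_le_le_tsum_div (fun _ => sq_nonneg _) (by positivity)).trans
      (by rw [show 4 * ε ^ 2 / α ^ 2 = ε ^ 2 / (α / 2) ^ 2 by ring]; gcongr)
  have hK : (⌊K⌋₊ : ℝ) ≤ K := Nat.floor_le <| rpow_nonneg (by
    simpa only [hratio] using inv_mul_log_div_nonneg (C := C) hc (half_pos hα0) (by linarith)) _
  calc (({i : ℕ | α ≤ b i}).ncard : ℝ) ≤ ⌊K⌋₊ + T.ncard := by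
        exact_mod_cast ncard_le_of_subset_Iio_union hcover (hsum.finite_setOf_le (by positivity))
    _ ≤ 4 * ε ^ 2 / α ^ 2 + K := by linarith

/-- **Counting lemma, exponential-decay case.** If `a, b` are nonincreasing nonnegative ℓ²
sequences with `‖a - b‖_{ℓ²} ≤ ε` and `a_k ≤ C e^{-c k^β}` for `k ≥ 1` (written 0-indexed),
then for `0 < α < 2C` one has `#{i : b_i ≥ α} ≤ 4ε²/α² + (c⁻¹ ln(2C α⁻¹))^{1/β}`. -/
theorem count_above_threshold_exp
    (ε α : ℝ) (hε : 0 < ε)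
    (a b : ℕ → ℝ) (ha : Antitone a) (hb : Antitone b)
    (ha0 : ∀ k, 0 ≤ a k) (hb0 : ∀ k, 0 ≤ b k)
    (hal2 : Memℓp a 2) (hbl2 : Memℓp b 2)
    (hdist : Real.sqrt (∑' k : ℕ, (a k - b k) ^ 2) ≤ ε)
    (C c β : ℝ) (hC : 0 < C) (hc : 0 < c) (hβ : 0 < β)
    (hdecay : ∀ k : ℕ, a k ≤ C * Real.exp (-c * ((k : ℝ) + 1) ^ β))
    (hα0 : 0 < α) (hα2C : α < 2 * C) :
    (({i : ℕ | α ≤ b i}).ncard : ℝ)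
      ≤ 4 * ε ^ 2 / α ^ 2 + (c⁻¹ * Real.log (2 * C * α⁻¹)) ^ (1/β) :=
  count_above_threshold_exp_general ε α a b hal2 hbl2 hdist C c β hc hβ hdecay hα0 hα2C
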